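/- In the ISCP dynamic-programming setting, suppose index j+1 exists and blk(j+1) = blk(j) + 1 (i.e., S_{j+1} is the first set of its block and a previous block exists). Then for every W ⊆ α: OPT(W, j+1, 1) = min( 2 + OPT(W \ S_{j+1}, j, flag(blk(j))), 1 + OPT(W, j, flag(blk(j))) ), where arithmetic is in ℕ ∪ {∞} with c + ∞ = ∞. -/

import Mathlib

/-!
A feasible `X` for `(W, j', 1)` either contains `j'` or not, and `j'` is the only index
`≤ j'` of the new block `blk j'`. If `j' ∈ X`, then `X \ {j'}` is feasible for
`(W \ S j', j)` and costs `2` less. If `j' ∉ X`, then `X` is feasible for `(W, j)` and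
additionally misses the block `blk j'`, whose flag is `1`, so it costs `1` more.
-/

/-- `OPTI S blk flag W j b` in the ISCP dynamic-programming setting: the infimum, over
all index sets `X ⊆ {i : i ≤ j}` covering `W`, containing at most one index from every
block `β_x` with `x ≤ blk j` and exactly one index from every such block whose (updated)
flag is `2`, of `2|X|` plus the number of blocks `β_x` (`x ≤ blk j`) with (updated) flag
`1` that `X` misses; here the flag of block `blk j` is overridden to be `b`.  The value
is `∞` if no such `X` exists. -/
noncomputable def OPTI {α : Type*} [DecidableEq α] {m q : ℕ}
    (S : Fin m → Finset α) (blk : Fin m → Fin q) (flag : Fin q → ℕ)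
    (W : Finset α) (j : Fin m) (b : ℕ) : ℕ∞ :=
  sInf { n : ℕ∞ | ∃ X : Finset (Fin m),
    (∀ i ∈ X, i ≤ j) ∧
    (W ⊆ X.biUnion S) ∧
    (∀ x : Fin q, x ≤ blk j → (X.filter (fun i => blk i = x)).card ≤ 1) ∧
    (∀ x : Fin q, x ≤ blk j → Function.update flag (blk j) b x = 2 →
      (X.filter (fun i => blk i = x)).card = 1) ∧
    n = 2 * (X.card : ℕ∞) +
      ((Finset.univ.filter (fun x : Fin q =>
        x ≤ blk j ∧ Function.update flag (blk j) b x = 1 ∧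
          ∀ i ∈ X, blk i ≠ x)).card : ℕ∞) }

open Finset

theorem Fin.le_iff_le_or_eq_of_val_eq_add_one {n : ℕ} {a a' x : Fin n}
    (h : (a' : ℕ) = a + 1) : x ≤ a' ↔ x ≤ a ∨ x = a' := by
  rw [Fin.le_def, Fin.le_def, Fin.ext_iff]
  omega

theorem Fin.lt_of_val_eq_add_one {n : ℕ} {a a' : Fin n} (h : (a' : ℕ) = a + 1) : a < a' := by
  rw [Fin.lt_def]
  omega

namespace OPTI

variable {α : Type*} [DecidableEq α] {m q : ℕ} {S : Fin m → Finset α} {blk : Fin m → Fin q}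
  {flag : Fin q → ℕ} {W : Finset α} {j j' : Fin m} {X Y : Finset (Fin m)}

def BlockFeasible (blk : Fin m → Fin q) (f : Fin q → ℕ) (X : Finset (Fin m)) (x : Fin q) :
    Prop :=
  #(X.filter (blk · = x)) ≤ 1 ∧ (f x = 2 → #(X.filter (blk · = x)) = 1)

def Feasible (S : Fin m → Finset α) (blk : Fin m → Fin q) (flag : Fin q → ℕ) (W : Finset α)
    (j : Fin m) (b : ℕ) (X : Finset (Fin m)) : Prop :=
  (∀ i ∈ X, i ≤ j) ∧ W ⊆ X.biUnion S ∧
    ∀ x ≤ blk j, BlockFeasible blk (Function.update flag (blk j) b) X x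

def missedBlocks (blk : Fin m → Fin q) (flag : Fin q → ℕ) (j : Fin m) (b : ℕ)
    (X : Finset (Fin m)) : Finset (Fin q) :=
  univ.filter fun x => x ≤ blk j ∧ Function.update flag (blk j) b x = 1 ∧ ∀ i ∈ X, blk i ≠ x

def cost (blk : Fin m → Fin q) (flag : Fin q → ℕ) (j : Fin m) (b : ℕ) (X : Finset (Fin m)) : ℕ∞ :=
  2 * (#X : ℕ∞) + #(missedBlocks blk flag j b X)

theorem eq_iInf_cost (S : Fin m → Finset α) (blk : Fin m → Fin q) (flag : Fin q → ℕ)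
    (W : Finset α) (j : Fin m) (b : ℕ) :
    OPTI S blk flag W j b = ⨅ X ∈ {X | Feasible S blk flag W j b X}, cost blk flag j b X := by
  rw [OPTI, ← sInf_image]
  congr 1
  ext n
  simp [Feasible, BlockFeasible, cost, missedBlocks, forall_and, and_assoc, eq_comm]

theorem blk_ne_of_le (hmono : Monotone blk) (hblk : (blk j' : ℕ) = blk j + 1) {i : Fin m}
    (hi : i ≤ j) : blk i ≠ blk j' :=
  ((hmono hi).trans_lt (Fin.lt_of_val_eq_add_one hblk)).ne

theorem filter_blk_eq_empty (hmono : Monotone blk) (hblk : (blk j' : ℕ) = blk j + 1)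
    (hX : ∀ i ∈ X, i ≤ j) : X.filter (blk · = blk j') = ∅ :=
  filter_eq_empty_iff.2 fun i hi => blk_ne_of_le hmono hblk (hX i hi)

theorem forall_blockFeasible_iff (hblk : (blk j' : ℕ) = blk j + 1)
    (hYX : ∀ x ≠ blk j', Y.filter (blk · = x) = X.filter (blk · = x))
    (hY : #(Y.filter (blk · = blk j')) ≤ 1) :
    (∀ x ≤ blk j', BlockFeasible blk (Function.update flag (blk j') 1) Y x) ↔
      ∀ x ≤ blk j, BlockFeasible blk flag X x := by
  simp only [Fin.le_iff_le_or_eq_of_val_eq_add_one hblk, or_imp, forall_and, forall_eq]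
  refine and_iff_left_of_imp ?_ |>.trans (forall₂_congr fun x hx => ?_)
  · exact fun _ => ⟨hY, by simp⟩
  · have hx' : x ≠ blk j' := (hx.trans_lt (Fin.lt_of_val_eq_add_one hblk)).ne
    simp only [BlockFeasible, hYX x hx', Function.update_of_ne hx']

theorem forall_mem_le_iff (hj' : (j' : ℕ) = j + 1) (hX : j' ∉ X) :
    (∀ i ∈ X, i ≤ j') ↔ ∀ i ∈ X, i ≤ j := by
  refine forall₂_congr fun i hi => ?_
  rw [Fin.le_iff_le_or_eq_of_val_eq_add_one hj', or_iff_left (ne_of_mem_of_not_mem hi hX)]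

theorem feasible_insert_iff (hmono : Monotone blk) (hj' : (j' : ℕ) = j + 1)
    (hblk : (blk j' : ℕ) = blk j + 1) (hX : j' ∉ X) :
    Feasible S blk flag W j' 1 (insert j' X) ↔
      Feasible S blk flag (W \ S j') j (flag (blk j)) X := by
  simp only [Feasible, forall_mem_insert, le_refl, true_and, biUnion_insert,
    forall_mem_le_iff hj' hX, Function.update_eq_self]
  refine and_congr_right fun hXj =>
    and_congr sdiff_le_iff.symm (forall_blockFeasible_iff hblk ?_ ?_)
  · intro x hx
    rw [filter_insert, if_neg hx.symm]
  · rw [filter_insert, if_pos rfl, filter_blk_eq_empty hmono hblk hXj]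
    simp

theorem feasible_iff (hmono : Monotone blk) (hj' : (j' : ℕ) = j + 1)
    (hblk : (blk j' : ℕ) = blk j + 1) (hX : j' ∉ X) :
    Feasible S blk flag W j' 1 X ↔ Feasible S blk flag W j (flag (blk j)) X := by
  simp only [Feasible, forall_mem_le_iff hj' hX, Function.update_eq_self]
  refine and_congr_right fun hXj => and_congr_right fun _ =>
    forall_blockFeasible_iff hblk (fun _ _ => rfl) ?_
  simp [filter_blk_eq_empty hmono hblk hXj]

theorem notMem_of_feasible (hj' : (j' : ℕ) = j + 1) {b : ℕ}
    (hX : Feasible S blk flag W j b X) : j' ∉ X :=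
  fun h => (hX.1 j' h).not_gt (Fin.lt_of_val_eq_add_one hj')

theorem setOf_feasible_eq (hmono : Monotone blk) (hj' : (j' : ℕ) = j + 1)
    (hblk : (blk j' : ℕ) = blk j + 1) :
    {X | Feasible S blk flag W j' 1 X} =
      insert j' '' {X | Feasible S blk flag (W \ S j') j (flag (blk j)) X} ∪
        {X | Feasible S blk flag W j (flag (blk j)) X} := by
  ext X
  simp only [Set.mem_union, Set.mem_image, Set.mem_ofPred_eq]
  constructor
  · intro hX
    by_cases hj'X : j' ∈ X
    · rw [← insert_erase hj'X, feasible_insert_iff hmono hj' hblk (notMem_erase j' X)] at hX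
      exact .inl ⟨X.erase j', hX, insert_erase hj'X⟩
    · exact .inr ((feasible_iff hmono hj' hblk hj'X).1 hX)
  · rintro (⟨Y, hY, rfl⟩ | hX)
    · exact (feasible_insert_iff hmono hj' hblk (notMem_of_feasible hj' hY)).2 hY
    · exact (feasible_iff hmono hj' hblk (notMem_of_feasible hj' hX)).2 hX

theorem missedBlocks_insert (hblk : (blk j' : ℕ) = blk j + 1) :
    missedBlocks blk flag j' 1 (insert j' X) = missedBlocks blk flag j (flag (blk j)) X := by
  ext x
  simp only [missedBlocks, mem_filter, mem_univ, true_and, forall_mem_insert,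
    Fin.le_iff_le_or_eq_of_val_eq_add_one hblk, Function.update_eq_self]
  by_cases hx : x = blk j'
  · subst hx
    simp [(Fin.lt_of_val_eq_add_one hblk).not_ge]
  · simp [hx, Ne.symm hx]

theorem missedBlocks_eq_insert (hmono : Monotone blk) (hblk : (blk j' : ℕ) = blk j + 1)
    (hX : ∀ i ∈ X, i ≤ j) :
    missedBlocks blk flag j' 1 X = insert (blk j') (missedBlocks blk flag j (flag (blk j)) X) := by
  ext x
  simp only [missedBlocks, mem_filter, mem_univ, true_and, mem_insert,
    Fin.le_iff_le_or_eq_of_val_eq_add_one hblk, Function.update_eq_self]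
  by_cases hx : x = blk j'
  · subst hx
    simpa using fun i hi => blk_ne_of_le hmono hblk (hX i hi)
  · simp [hx]

theorem cost_insert (hblk : (blk j' : ℕ) = blk j + 1) (hX : j' ∉ X) :
    cost blk flag j' 1 (insert j' X) = 2 + cost blk flag j (flag (blk j)) X := by
  rw [cost, cost, missedBlocks_insert hblk, card_insert_of_notMem hX]
  push_cast
  ring

theorem cost_eq_one_add (hmono : Monotone blk) (hblk : (blk j' : ℕ) = blk j + 1)
    (hX : ∀ i ∈ X, i ≤ j) :
    cost blk flag j' 1 X = 1 + cost blk flag j (flag (blk j)) X := by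
  rw [cost, cost, missedBlocks_eq_insert hmono hblk hX,
    card_insert_of_notMem (by simp [missedBlocks, (Fin.lt_of_val_eq_add_one hblk).not_ge])]
  push_cast
  ring

end OPTI

theorem iscp_recurrence_new_block_flag_one_general
    {α : Type*} [DecidableEq α] {m q : ℕ}
    (S : Fin m → Finset α) (blk : Fin m → Fin q)
    (hmono : Monotone blk)
    (flag : Fin q → ℕ)
    (j j' : Fin m) (hj' : (j' : ℕ) = (j : ℕ) + 1)
    (hblk : (blk j' : ℕ) = (blk j : ℕ) + 1)
    (W : Finset α) :
    OPTI S blk flag W j' 1 =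
      min (2 + OPTI S blk flag (W \ S j') j (flag (blk j)))
        (1 + OPTI S blk flag W j (flag (blk j))) := by
  simp only [OPTI.eq_iInf_cost, OPTI.setOf_feasible_eq hmono hj' hblk, _root_.iInf_union,
    iInf_image, ENat.add_iInf₂]
  congr 1 <;> refine iInf_congr fun X => iInf_congr fun hX => ?_
  · exact OPTI.cost_insert hblk (OPTI.notMem_of_feasible hj' hX)
  · exact OPTI.cost_eq_one_add hmono hblk hX.1

/-- ISCP recurrence when `S_{j+1}` is the first set of its block and a
previous block exists, for flag `b = 1`:
`OPT(W, j+1, 1) = min(2 + OPT(W \\ S_{j+1}, j, flag(blk j)), 1 + OPT(W, j, flag(blk j)))`. -/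
theorem iscp_recurrence_new_block_flag_one
    {α : Type*} [DecidableEq α] {m q : ℕ} (hm : 0 < m) (hq : 0 < q)
    (S : Fin m → Finset α) (blk : Fin m → Fin q)
    (hmono : Monotone blk) (hsurj : Function.Surjective blk)
    (flag : Fin q → ℕ) (hflag : ∀ x, flag x = 1 ∨ flag x = 2)
    (j j' : Fin m) (hj' : (j' : ℕ) = (j : ℕ) + 1)
    (hblk : (blk j' : ℕ) = (blk j : ℕ) + 1)
    (W : Finset α) :
    OPTI S blk flag W j' 1 =
      min (2 + OPTI S blk flag (W \ S j') j (flag (blk j)))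
        (1 + OPTI S blk flag W j (flag (blk j))) :=
  iscp_recurrence_new_block_flag_one_general S blk hmono flag j j' hj' hblk W
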